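/- Let M ∈ F_q[T] be monic irreducible of degree d. The roots Λ_M of the Carlitz polynomial C_M(Z) in a fixed algebraic closure of F_q(T) form an F_q[T]-module under the Carlitz action (A acting as z ↦ C_A(z)) that is cyclic and isomorphic to F_q[T]/(M); in particular |Λ_M| = q^d and every nonzero element of Λ_M generates Λ_M as an F_q[T]-module. -/

import Mathlib

/-!
Writing `q = |F_q|` and `d = deg M`, the Carlitz polynomial `C_M` has degree `q^d` and
derivative the nonzero constant `M`, so it is separable and `Λ_M` has exactly `q^d` elements.
For `λ ∈ Λ_M` nonzero, the kernel of `A ↦ C_A(λ)` is an ideal containing `M` but not `1`,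
hence equal to `(M)` because `M` is irreducible. The orbit map is then injective on the
`q^d` polynomials of degree `< d`, so by counting its image is all of `Λ_M`.
-/

open Polynomial

theorem Polynomial.Separable.ncard_setOf_eval_eq_zero {L : Type*} [Field L] [IsAlgClosed L]
    {p : L[X]} (hp : p.Separable) : {z | p.eval z = 0}.ncard = p.natDegree := by
  classical
  have hroots : {z | p.eval z = 0} = ↑p.roots.toFinset := by
    ext z
    simp [hp.ne_zero]
  rw [hroots, Set.ncard_coe_finset, Multiset.toFinset_card_of_nodup (nodup_roots hp),
    IsAlgClosed.card_roots_eq_natDegree]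

variable {Fq : Type*} [Field Fq] [Fintype Fq]

/-- `Carl A` is the Carlitz polynomial `C_A(Z)`: the outer variable is `Z`, the inner one `T`. -/
structure IsCarlitz (Carl : Fq[X] → Fq[X][X]) : Prop where
  map_one : Carl 1 = X
  map_X : Carl X = X ^ Fintype.card Fq + C X * X
  map_add : ∀ A B, Carl (A + B) = Carl A + Carl B
  map_C_mul : ∀ (a : Fq) A, Carl (C a * A) = C (C a) * Carl A
  map_mul : ∀ A B, Carl (A * B) = (Carl A).comp (Carl B)

noncomputable def carlitzAct {L : Type*} [CommRing L] [Algebra Fq[X] L]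
    (Carl : Fq[X] → Fq[X][X]) (A : Fq[X]) (z : L) : L :=
  ((Carl A).map (algebraMap Fq[X] L)).eval z

/-- The `M`-torsion `Λ_M` of the Carlitz module. -/
def carlitzTorsion {L : Type*} [CommRing L] [Algebra Fq[X] L]
    (Carl : Fq[X] → Fq[X][X]) (M : Fq[X]) : Set L :=
  {z | carlitzAct Carl M z = 0}

namespace IsCarlitz

variable {Carl : Fq[X] → Fq[X][X]} (hC : IsCarlitz Carl)
include hC

theorem map_zero : Carl 0 = 0 := by
  simpa using hC.map_add 0 0

theorem map_C (a : Fq) : Carl (C a) = C (C a) * X := by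
  simpa [hC.map_one] using hC.map_C_mul a 1

theorem map_mul_X (A : Fq[X]) :
    Carl (A * X) = (Carl A).comp (X ^ Fintype.card Fq + C X * X) := by
  rw [hC.map_mul, hC.map_X]

theorem coeff_zero (A : Fq[X]) : (Carl A).coeff 0 = 0 := by
  simp only [coeff_zero_eq_eval_zero]
  induction A using Polynomial.induction_on with
  | C a => simp [hC.map_C]
  | add A B hA hB => simp [hC.map_add, hA, hB]
  | monomial n a ih =>
    rw [pow_succ, ← mul_assoc, hC.map_mul_X, eval_comp]
    simp [Fintype.card_ne_zero, ih]

theorem derivative_eq (A : Fq[X]) : derivative (Carl A) = C A := by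
  have hq : ((Fintype.card Fq : ℕ) : Fq[X][X]) = 0 := by
    rw [← map_natCast (C.comp C), Nat.cast_card_eq_zero, _root_.map_zero]
  induction A using Polynomial.induction_on with
  | C a => simp [hC.map_C]
  | add A B hA hB => rw [hC.map_add, derivative_add, hA, hB, C_add]
  | monomial n a ih =>
    rw [pow_succ, ← mul_assoc, hC.map_mul_X, derivative_comp, ih]
    simp [derivative_X_pow, hq]
    ring

theorem natDegree_X : (Carl X).natDegree = Fintype.card Fq := by
  rw [hC.map_X, natDegree_add_eq_left_of_degree_lt] <;> simp [Fintype.one_lt_card]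

theorem monic_X : (Carl X).Monic := by
  rw [hC.map_X]
  exact monic_X_pow_add ((degree_C_mul_X_le _).trans_lt (by exact_mod_cast Fintype.one_lt_card))

theorem natDegree_X_pow (n : ℕ) : (Carl (X ^ n)).natDegree = Fintype.card Fq ^ n := by
  induction n with
  | zero => simp [hC.map_one]
  | succ n ih => rw [pow_succ, hC.map_mul, natDegree_comp, ih, hC.natDegree_X, pow_succ]

theorem monic_X_pow (n : ℕ) : (Carl (X ^ n)).Monic := by
  induction n with
  | zero => simp [hC.map_one]
  | succ n ih =>
    rw [pow_succ, hC.map_mul]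
    exact ih.comp hC.monic_X (by rw [hC.natDegree_X]; exact Fintype.card_ne_zero)

theorem natDegree_le {A : Fq[X]} {n : ℕ} (hA : A.natDegree ≤ n) :
    (Carl A).natDegree ≤ Fintype.card Fq ^ n := by
  refine induction_with_natDegree_le (fun A ↦ (Carl A).natDegree ≤ Fintype.card Fq ^ n) n
    (by simp [hC.map_zero]) (fun k a _ hk ↦ ?_) (fun A B _ _ hA hB ↦ ?_) A hA
  · rw [hC.map_C_mul]
    exact (natDegree_C_mul_le _ _).trans
      (hC.natDegree_X_pow k ▸ Nat.pow_le_pow_right Fintype.card_pos hk)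
  · rw [hC.map_add]
    exact natDegree_add_le_of_degree_le hA hB

theorem degree_lt {A : Fq[X]} {n : ℕ} (hA : A.degree < n) :
    (Carl A).degree < (Fintype.card Fq ^ n : ℕ) := by
  rcases eq_or_ne A 0 with rfl | hA0
  · exact hC.map_zero ▸ degree_zero.trans_lt (WithBot.bot_lt_coe _)
  calc (Carl A).degree ≤ (Carl A).natDegree := degree_le_natDegree
    _ ≤ (Fintype.card Fq ^ A.natDegree : ℕ) := by exact_mod_cast hC.natDegree_le le_rfl
    _ < (Fintype.card Fq ^ n : ℕ) := by
      exact_mod_cast Nat.pow_lt_pow_right Fintype.one_lt_card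
        ((natDegree_lt_iff_degree_lt hA0).mpr hA)

theorem natDegree_of_monic {M : Fq[X]} (hM : M.Monic) :
    (Carl M).natDegree = Fintype.card Fq ^ M.natDegree := by
  have hsplit : M = M.eraseLead + X ^ M.natDegree := by
    simpa [hM.leadingCoeff] using M.eraseLead_add_C_mul_X_pow.symm
  have hlt : (Carl M.eraseLead).degree < (Carl (X ^ M.natDegree)).degree := by
    rw [degree_eq_natDegree (hC.monic_X_pow _).ne_zero, hC.natDegree_X_pow]
    exact hC.degree_lt ((degree_eraseLead_lt hM.ne_zero).trans_eq
      (degree_eq_natDegree hM.ne_zero))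
  calc (Carl M).natDegree = (Carl M.eraseLead + Carl (X ^ M.natDegree)).natDegree := by
        rw [← hC.map_add, ← hsplit]
    _ = _ := by rw [natDegree_add_eq_right_of_degree_lt hlt, hC.natDegree_X_pow]

section CommRing

variable {L : Type*} [CommRing L] [Algebra Fq[X] L]

theorem act_add (A B : Fq[X]) (z : L) :
    carlitzAct Carl (A + B) z = carlitzAct Carl A z + carlitzAct Carl B z := by
  simp [carlitzAct, hC.map_add]

theorem act_sub (A B : Fq[X]) (z : L) :
    carlitzAct Carl (A - B) z = carlitzAct Carl A z - carlitzAct Carl B z := by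
  rw [eq_sub_iff_add_eq, ← hC.act_add, sub_add_cancel]

theorem act_one (z : L) : carlitzAct Carl 1 z = z := by
  simp [carlitzAct, hC.map_one]

theorem act_mul (A B : Fq[X]) (z : L) :
    carlitzAct Carl (A * B) z = carlitzAct Carl A (carlitzAct Carl B z) := by
  simp [carlitzAct, hC.map_mul, Polynomial.map_comp]

theorem act_zero_right (A : Fq[X]) : carlitzAct Carl A (0 : L) = 0 := by
  rw [carlitzAct, ← coeff_zero_eq_eval_zero, coeff_map, hC.coeff_zero, RingHom.map_zero]

theorem act_comm (A B : Fq[X]) (z : L) :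
    carlitzAct Carl A (carlitzAct Carl B z) = carlitzAct Carl B (carlitzAct Carl A z) := by
  rw [← hC.act_mul, mul_comm, hC.act_mul]

theorem act_mem_torsion {M : Fq[X]} {z : L} (hz : z ∈ carlitzTorsion Carl M) (A : Fq[X]) :
    carlitzAct Carl A z ∈ carlitzTorsion Carl M := by
  rw [carlitzTorsion, Set.mem_ofPred_eq] at hz ⊢
  rw [hC.act_comm, hz, hC.act_zero_right]

variable {M : Fq[X]} {lam : L}

theorem act_eq_zero_iff_dvd (hM : Irreducible M) (hlam : lam ∈ carlitzTorsion Carl M)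
    (hlam0 : lam ≠ 0) (A : Fq[X]) : carlitzAct Carl A lam = 0 ↔ M ∣ A := by
  refine ⟨fun hA ↦ ?_, fun ⟨B, hB⟩ ↦ ?_⟩
  · by_contra hMA
    obtain ⟨U, V, hUV⟩ := (hM.coprime_iff_not_dvd).mpr hMA
    apply hlam0
    rw [← hC.act_one lam, ← hUV, hC.act_add, hC.act_mul, hC.act_mul, hlam, hA,
      hC.act_zero_right, hC.act_zero_right, add_zero]
  · rw [hB, mul_comm, hC.act_mul, hlam, hC.act_zero_right]

theorem act_eq_act_iff_dvd (hM : Irreducible M) (hlam : lam ∈ carlitzTorsion Carl M)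
    (hlam0 : lam ≠ 0) (A B : Fq[X]) :
    carlitzAct Carl A lam = carlitzAct Carl B lam ↔ M ∣ A - B := by
  rw [← hC.act_eq_zero_iff_dvd hM hlam hlam0, hC.act_sub, sub_eq_zero]

end CommRing

section Field

variable {L : Type*} [Field L] [Algebra Fq[X] L] {M : Fq[X]}

theorem separable_map (hinj : Function.Injective (algebraMap Fq[X] L)) (hM : M ≠ 0) :
    ((Carl M).map (algebraMap Fq[X] L)).Separable := by
  have hM' : algebraMap Fq[X] L M ≠ 0 := (map_ne_zero_iff _ hinj).mpr hM
  rw [separable_def', derivative_map, hC.derivative_eq, Polynomial.map_C]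
  exact ⟨0, C (algebraMap _ L M)⁻¹, by
    rw [zero_mul, zero_add, ← C_mul, inv_mul_cancel₀ hM', C_1]⟩

variable [IsAlgClosed L]

theorem ncard_torsion (hinj : Function.Injective (algebraMap Fq[X] L)) (hM : M.Monic) :
    (carlitzTorsion Carl M : Set L).ncard = Fintype.card Fq ^ M.natDegree := by
  unfold carlitzTorsion carlitzAct
  rw [(hC.separable_map hinj hM.ne_zero).ncard_setOf_eval_eq_zero,
    natDegree_map_eq_of_injective hinj, hC.natDegree_of_monic hM]

theorem exists_act_eq (hinj : Function.Injective (algebraMap Fq[X] L)) (hM : M.Monic)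
    (hMirr : Irreducible M) {lam : L} (hlam : lam ∈ carlitzTorsion Carl M) (hlam0 : lam ≠ 0)
    {z : L} (hz : z ∈ carlitzTorsion Carl M) : ∃ A, z = carlitzAct Carl A lam := by
  have hS : (degreeLT Fq M.natDegree : Set Fq[X]).ncard = Fintype.card Fq ^ M.natDegree := by
    rw [← Nat.card_coe_set_eq, SetLike.coe_sort_coe, Nat.card_congr (degreeLTEquiv Fq _).toEquiv,
      Nat.card_fun, Nat.card_eq_fintype_card, Nat.card_fin]
  set S : Set Fq[X] := ↑(degreeLT Fq M.natDegree)
  have hinjOn : Set.InjOn (carlitzAct Carl · lam) S := by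
    intro A hA B hB hAB
    rw [hC.act_eq_act_iff_dvd hMirr hlam hlam0] at hAB
    refine sub_eq_zero.mp (eq_zero_of_dvd_of_degree_lt hAB ?_)
    rw [degree_eq_natDegree hM.ne_zero]
    exact (degree_sub_le _ _).trans_lt (max_lt (mem_degreeLT.mp hA) (mem_degreeLT.mp hB))
  have hsub : (carlitzAct Carl · lam) '' S ⊆ carlitzTorsion Carl M := by
    rintro _ ⟨A, -, rfl⟩
    exact hC.act_mem_torsion hlam A
  have himage : (carlitzAct Carl · lam) '' S = carlitzTorsion Carl M :=
    Set.eq_of_subset_of_ncard_le hsub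
      (by rw [hinjOn.ncard_image, hS, hC.ncard_torsion hinj hM])
      (Set.finite_of_ncard_pos (by rw [hC.ncard_torsion hinj hM]; positivity))
  rw [← himage] at hz
  obtain ⟨A, -, hA⟩ := hz
  exact ⟨A, hA.symm⟩

end Field

end IsCarlitz

/-- The set `Λ_M` of roots of the Carlitz polynomial `C_M(Z)` (for `M` monic irreducible
of degree `d`) in an algebraically closed field `L ⊇ F_q[T]` has `q^d` elements, is
stable under the Carlitz action, and is a cyclic `F_q[T]`-module isomorphic to
`F_q[T]/(M)`: every nonzero `λ ∈ Λ_M` generates it, with `C_A(λ) = C_B(λ) ↔ M ∣ A - B`. -/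
theorem stmt8 (Fq : Type) [Field Fq] [Fintype Fq]
    (Carl : Polynomial Fq → Polynomial (Polynomial Fq))
    (h1 : Carl 1 = X)
    (hT : Carl X = X ^ (Fintype.card Fq) + C X * X)
    (hadd : ∀ M N : Polynomial Fq, Carl (M + N) = Carl M + Carl N)
    (hsmul : ∀ (a : Fq) (M : Polynomial Fq), Carl (C a * M) = C (C a) * Carl M)
    (hmul : ∀ M N : Polynomial Fq, Carl (M * N) = (Carl M).comp (Carl N))
    (L : Type) [Field L] [IsAlgClosed L] [Algebra (Polynomial Fq) L]
    (hinj : Function.Injective (algebraMap (Polynomial Fq) L))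
    (M : Polynomial Fq) (hmonic : M.Monic) (hirr : Irreducible M)
    (d : ℕ) (hd : M.natDegree = d)
    (act : Polynomial Fq → L → L)
    (hact : ∀ (A : Polynomial Fq) (z : L),
      act A z = Polynomial.eval z ((Carl A).map (algebraMap (Polynomial Fq) L)))
    (Λ : Set L) (hΛ : Λ = {z : L | act M z = 0}) :
    Λ.ncard = Fintype.card Fq ^ d ∧
    (∀ (A : Polynomial Fq), ∀ z ∈ Λ, act A z ∈ Λ) ∧
    (∀ lam ∈ Λ, lam ≠ 0 →
      (∀ z ∈ Λ, ∃ A : Polynomial Fq, z = act A lam) ∧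
      (∀ A B : Polynomial Fq, act A lam = act B lam ↔ M ∣ A - B)) := by
  have hC : IsCarlitz Carl := ⟨h1, hT, hadd, hsmul, hmul⟩
  obtain rfl : act = carlitzAct Carl := funext₂ hact
  subst hΛ hd
  refine ⟨hC.ncard_torsion hinj hmonic, fun A z hz ↦ hC.act_mem_torsion hz A,
    fun lam hlam hlam0 ↦ ⟨fun z hz ↦ hC.exists_act_eq hinj hmonic hirr hlam hlam0 hz,
      hC.act_eq_act_iff_dvd hirr hlam hlam0⟩⟩
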